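/- arXiv:1210.1329 — 6 statements merged into one kernel-verified Lean document; each statement's English description precedes it below -/
import Mathlib

section
/- There exists a constant C > 0 such that for all B > 0 and all w ∈ ℝ one has |s_B(w) − (2/3)·(w)₊^(3/2)| ≤ C·B^(3/2). (Uniform estimate P′_B(w) − P′(w) = O(B^(3/2)), equation (25-3-29).) -/
/-!
Substituting `w = 2B x` gives `s_B(w) - (2/3) w₊^{3/2} = (2B)^{3/2} E(x)`, where
`E(x) = √x / 2 + ∑_{j ≥ 1} √(x - j) - (2/3) x^{3/2}` is the error of the trapezoid rule with unit
step for `∫₀ˣ √t dt`, so it suffices to bound `E` uniformly. Removing the last step changes `E` by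
the trapezoid defect of `√` on `[x - 1, x]`; with `a = √(x - 1)`, `b = √x` this defect is
`(b - a)³ / 6 = 1 / (6 (a + b)³) ≥ 0`, and it is at most `1 / √x - 1 / √(x + 1)`, so the defects
telescope to at most `1` and `E` stays within its range on `[0, 1]` up to that amount.
-/

/-- The derivative of the magnetic Thomas–Fermi pressure. -/
noncomputable def s (B w : ℝ) : ℝ :=
  2 * B * ((1 / 2) * (max w 0) ^ ((1 : ℝ) / 2) +
    ∑' j : ℕ, (max (w - 2 * ((j : ℝ) + 1) * B) 0) ^ ((1 : ℝ) / 2))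

open Real Set

/-- `Real.sqrt` vanishes on negative arguments, so `√` plays the role of `(·)₊^{1/2}` and only the
terms with `j + 1 < x` are nonzero. -/
noncomputable def sqrtLatticeSum (x : ℝ) : ℝ := ∑' j : ℕ, √(x - (j + 1))

noncomputable def sqrtTrapezoidError (x : ℝ) : ℝ :=
  √x / 2 + sqrtLatticeSum x - 2 / 3 * √x ^ 3

noncomputable def sqrtTrapezoidDefect (x : ℝ) : ℝ :=
  2 / 3 * (√x ^ 3 - √(x - 1) ^ 3) - (√(x - 1) + √x) / 2

lemma summable_sqrt_sub_succ (x : ℝ) : Summable fun j : ℕ ↦ √(x - (j + 1)) := by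
  refine summable_of_ne_finset_zero (s := Finset.range ⌈x⌉₊) fun j hj ↦ ?_
  rw [Finset.mem_range, not_lt] at hj
  have hxj : x ≤ j := (Nat.le_ceil x).trans (mod_cast hj)
  exact sqrt_eq_zero_of_nonpos (by linarith)

lemma sqrtLatticeSum_eq_sqrt_sub_one_add (x : ℝ) :
    sqrtLatticeSum x = √(x - 1) + sqrtLatticeSum (x - 1) := by
  rw [sqrtLatticeSum, (summable_sqrt_sub_succ x).tsum_eq_zero_add, sqrtLatticeSum]
  congr 1
  · norm_num
  · exact tsum_congr fun j ↦ by push_cast; ring_nf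

lemma sqrtLatticeSum_of_le_one {x : ℝ} (hx : x ≤ 1) : sqrtLatticeSum x = 0 := by
  refine (tsum_congr fun j : ℕ ↦ sqrt_eq_zero_of_nonpos ?_).trans tsum_zero
  linarith [(Nat.cast_nonneg j : (0 : ℝ) ≤ j)]

lemma sqrtTrapezoidError_of_le_one {x : ℝ} (hx : x ≤ 1) :
    sqrtTrapezoidError x = √x / 2 - 2 / 3 * √x ^ 3 := by
  rw [sqrtTrapezoidError, sqrtLatticeSum_of_le_one hx, add_zero]

lemma sqrtTrapezoidError_eq_sub_defect (x : ℝ) :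
    sqrtTrapezoidError x = sqrtTrapezoidError (x - 1) - sqrtTrapezoidDefect x := by
  rw [sqrtTrapezoidError, sqrtTrapezoidError, sqrtLatticeSum_eq_sqrt_sub_one_add,
    sqrtTrapezoidDefect]
  ring

lemma sqrtTrapezoidDefect_mem_Icc {x : ℝ} (hx : 1 ≤ x) :
    sqrtTrapezoidDefect x ∈ Icc 0 (1 / √x - 1 / √(x + 1)) := by
  set a := √(x - 1)
  set b := √x
  set c := √(x + 1)
  have ha : 0 ≤ a := sqrt_nonneg _
  have hb : 1 ≤ b := one_le_sqrt.mpr hx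
  have hab : b ^ 2 = a ^ 2 + 1 := by
    rw [sq_sqrt (by linarith), sq_sqrt (by linarith)]; ring
  have hbc : c ^ 2 = b ^ 2 + 1 := by
    rw [sq_sqrt (by linarith), sq_sqrt (by linarith)]
  have hbc_le : b ≤ c := sqrt_le_sqrt (by linarith)
  have hdefect : sqrtTrapezoidDefect x = (b - a) ^ 3 / 6 := by
    rw [sqrtTrapezoidDefect]; linear_combination (a + b) / 2 * hab
  have hba : b - a = 1 / (a + b) := by
    rw [eq_div_iff (by positivity)]; linear_combination hab
  have hcb : c - b = 1 / (b + c) := by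
    rw [eq_div_iff (by positivity)]; linear_combination hbc
  have hcb_le : c ≤ 2 * b := by nlinarith
  have hba_nonneg : 0 ≤ b - a := by rw [hba]; positivity
  rw [hdefect]
  refine ⟨by positivity, ?_⟩
  calc (b - a) ^ 3 / 6 ≤ (1 / b) ^ 3 / 6 := by
        gcongr; rw [hba]; exact one_div_le_one_div_of_le (by positivity) (by linarith)
    _ ≤ 1 / ((b + c) * (b * c)) := by
        rw [div_pow, one_pow, div_div]
        exact one_div_le_one_div_of_le (by positivity) (by nlinarith)
    _ = 1 / b - 1 / c := by
        rw [div_sub_div _ _ (by positivity) (by positivity), one_mul, mul_one, hcb]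
        field_simp

lemma forall_of_Icc_zero_one_of_sub_one {P : ℝ → Prop} (base : ∀ x ∈ Icc (0 : ℝ) 1, P x)
    (step : ∀ x, 1 ≤ x → P (x - 1) → P x) {x : ℝ} (hx : 0 ≤ x) : P x := by
  suffices ∀ n : ℕ, ∀ x ∈ Icc (0 : ℝ) (n + 1), P x from
    this ⌈x⌉₊ x ⟨hx, (Nat.le_ceil x).trans (by linarith)⟩
  intro n
  induction n with
  | zero => simpa using base
  | succ n ih =>
    rintro x ⟨hx0, hxn⟩
    rcases le_total x 1 with hx1 | hx1
    · exact base x ⟨hx0, hx1⟩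
    · exact step x hx1 (ih (x - 1) ⟨by linarith, by push_cast at hxn; linarith⟩)

/-- Along unit steps the error decreases, while the error minus `1 / √(x + 1)` increases. -/
lemma sqrtTrapezoidError_bounds {x : ℝ} (hx : 0 ≤ x) :
    sqrtTrapezoidError x ≤ 1 / 2 ∧ -2 ≤ sqrtTrapezoidError x - 1 / √(x + 1) := by
  refine forall_of_Icc_zero_one_of_sub_one
    (P := fun x ↦ sqrtTrapezoidError x ≤ 1 / 2 ∧ -2 ≤ sqrtTrapezoidError x - 1 / √(x + 1))
    ?_ ?_ hx
  · rintro x ⟨hx0, hx1⟩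
    rw [sqrtTrapezoidError_of_le_one hx1]
    have hu0 : 0 ≤ √x := sqrt_nonneg x
    have hu1 : √x ≤ 1 := sqrt_le_one.mpr hx1
    have hu3 : √x ^ 3 ≤ 1 := pow_le_one₀ hu0 hu1
    have hg : 1 / √(x + 1) ≤ 1 := by
      rw [div_le_one (by positivity)]; exact one_le_sqrt.mpr (by linarith)
    constructor <;> nlinarith [pow_nonneg hu0 3]
  · rintro x hx ⟨hupper, hlower⟩
    obtain ⟨hdefect0, hdefect1⟩ := sqrtTrapezoidDefect_mem_Icc hx
    rw [sub_add_cancel] at hlower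
    rw [sqrtTrapezoidError_eq_sub_defect x]
    constructor <;> linarith

lemma abs_sqrtTrapezoidError_le (x : ℝ) : |sqrtTrapezoidError x| ≤ 2 := by
  rcases le_total x 0 with hx | hx
  · rw [sqrtTrapezoidError_of_le_one (by linarith), sqrt_eq_zero_of_nonpos hx]
    norm_num
  · obtain ⟨hupper, hlower⟩ := sqrtTrapezoidError_bounds hx
    have hg : 0 ≤ 1 / √(x + 1) := by positivity
    rw [abs_le]
    constructor <;> linarith

lemma max_zero_rpow_one_half (w : ℝ) : max w 0 ^ ((1 : ℝ) / 2) = √w := by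
  rw [← sqrt_eq_rpow]
  rcases le_total w 0 with hw | hw
  · rw [max_eq_right hw, sqrt_zero, sqrt_eq_zero_of_nonpos hw]
  · rw [max_eq_left hw]

lemma max_zero_rpow_three_halves (w : ℝ) : max w 0 ^ ((3 : ℝ) / 2) = √w ^ 3 := by
  rw [rpow_div_two_eq_sqrt _ (le_max_right w 0), sqrt_eq_rpow, max_zero_rpow_one_half]
  norm_cast

lemma rpow_three_halves {c : ℝ} (hc : 0 ≤ c) : c ^ ((3 : ℝ) / 2) = c * √c := by
  rw [rpow_div_two_eq_sqrt _ hc]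
  norm_cast
  rw [pow_succ, sq_sqrt hc]

lemma s_sub_eq_rpow_mul_sqrtTrapezoidError {B : ℝ} (hB : 0 < B) (w : ℝ) :
    s B w - 2 / 3 * max w 0 ^ ((3 : ℝ) / 2) =
      (2 * B) ^ ((3 : ℝ) / 2) * sqrtTrapezoidError (w / (2 * B)) := by
  set c := 2 * B with hc_def
  have hc : 0 < c := by positivity
  obtain ⟨x, rfl⟩ : ∃ x, w = c * x := ⟨w / c, by field_simp⟩
  have hterm (j : ℕ) :
      max (c * x - 2 * ((j : ℝ) + 1) * B) 0 ^ ((1 : ℝ) / 2) = √c * √(x - (j + 1)) := by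
    rw [max_zero_rpow_one_half, show c * x - 2 * ((j : ℝ) + 1) * B = c * (x - (j + 1)) by ring,
      sqrt_mul hc.le]
  rw [s, tsum_congr hterm, tsum_mul_left, max_zero_rpow_one_half, max_zero_rpow_three_halves,
    mul_div_cancel_left₀ x hc.ne', sqrtTrapezoidError, sqrtLatticeSum, rpow_three_halves hc.le,
    sqrt_mul hc.le]
  linear_combination (-(2 / 3) * √c * √x ^ 3) * (sq_sqrt hc.le + hc_def)

/-- Uniform estimate `P′_B(w) − P′(w) = O(B^(3/2))` (equation (25-3-29)):
there is `C > 0` such that for all `B > 0` and `w ∈ ℝ`,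
`|s_B(w) − (2/3)·(w)₊^(3/2)| ≤ C·B^(3/2)`. -/
theorem magnetic_density_approx :
    ∃ C : ℝ, 0 < C ∧ ∀ B : ℝ, 0 < B → ∀ w : ℝ,
      |s B w - (2 / 3) * (max w 0) ^ ((3 : ℝ) / 2)| ≤ C * B ^ ((3 : ℝ) / 2) := by
  refine ⟨2 * 2 ^ ((3 : ℝ) / 2), by positivity, fun B hB w ↦ ?_⟩
  rw [s_sub_eq_rpow_mul_sqrtTrapezoidError hB, abs_mul, abs_of_nonneg (by positivity),
    mul_rpow zero_le_two hB.le]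
  calc 2 ^ ((3 : ℝ) / 2) * B ^ ((3 : ℝ) / 2) * |sqrtTrapezoidError (w / (2 * B))|
      ≤ 2 ^ ((3 : ℝ) / 2) * B ^ ((3 : ℝ) / 2) * 2 := by
        gcongr; exact abs_sqrtTrapezoidError_le _
    _ = 2 * 2 ^ ((3 : ℝ) / 2) * B ^ ((3 : ℝ) / 2) := by ring
end

section
/- For all measurable sets G, G′ ⊆ ℝ³ with 0 < |G| < ∞ and 0 < |G′| < ∞ one has D(χ_G, χ_{G′}) ≤ 2π·(3/(4π))^(2/3)·|G|·|G′|·(max(|G|, |G′|))^(−1/3). (Inequality (25-6-67).) -/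
open MeasureTheory

/-- Three-dimensional Euclidean space. -/
abbrev E3 : Type := EuclideanSpace ℝ (Fin 3)

/-- The Coulomb interaction `D(f, g) = ∫∫ f(x)·g(y)·‖x − y‖⁻¹ dx dy`. -/
noncomputable def Dcoul (f g : E3 → ℝ) : ℝ :=
  ∫ p : E3 × E3, f p.1 * g p.2 * ‖p.1 - p.2‖⁻¹

open Real Set

lemma E3_ball_vol (x : E3) (r : ℝ) :
    volume (Metric.ball x r) = ENNReal.ofReal (4 / 3 * π * r ^ 3) := by
  rcases le_or_gt r 0 with hr | hr
  · rw [Metric.ball_eq_empty.mpr hr, measure_empty]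
    symm
    rw [ENNReal.ofReal_eq_zero]
    nlinarith [pi_pos, sq_nonneg r, mul_nonneg (sq_nonneg r) (neg_nonneg.mpr hr)]
  · rw [EuclideanSpace.volume_ball]
    have hcard : (Fintype.card (Fin 3) : ℝ) = 3 := by simp
    have hG : Real.Gamma ((Fintype.card (Fin 3) : ℝ) / 2 + 1) = 3 / 4 * Real.sqrt π := by
      rw [hcard]
      have h1 : (3 : ℝ) / 2 + 1 = 3 / 2 + 1 := rfl
      rw [Real.Gamma_add_one (by norm_num)]
      have h2 : (3 : ℝ) / 2 = 1 / 2 + 1 := by norm_num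
      rw [h2, Real.Gamma_add_one (by norm_num), Real.Gamma_one_half_eq]
      ring
    rw [hG]
    have hs : Real.sqrt π > 0 := Real.sqrt_pos.mpr pi_pos
    have hsq : Real.sqrt π ^ 2 = π := Real.sq_sqrt pi_pos.le
    have hval : Real.sqrt π ^ Fintype.card (Fin 3) / (3 / 4 * Real.sqrt π) = 4 / 3 * π := by
      rw [Fintype.card_fin]
      field_simp
      nlinarith [hsq]
    rw [hval, ← ENNReal.ofReal_pow hr.le, ← ENNReal.ofReal_mul (by positivity)]
    rw [Fintype.card_fin]
    ring_nf

/-- The bathtub bound for the inner Coulomb integral. -/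
lemma inner_bound (x : E3) (B : Set E3) (_hB : MeasurableSet B)
    (hB0 : 0 < volume B) (hBfin : volume B < ⊤) :
    ∫⁻ y in B, ENNReal.ofReal ‖x - y‖⁻¹ ≤
      ENNReal.ofReal ((3 / 2) * (4 / 3 * π) ^ ((1 : ℝ) / 3) *
        (volume B).toReal ^ ((2 : ℝ) / 3)) := by
  set c : ℝ := 4 / 3 * π with hc_def
  have hc : 0 < c := by positivity
  set V : ℝ := (volume B).toReal with hV_def
  have hV : 0 < V := ENNReal.toReal_pos hB0.ne' hBfin.ne
  set t₀ : ℝ := (c / V) ^ ((1 : ℝ) / 3) with ht₀_def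
  have ht₀ : 0 < t₀ := Real.rpow_pos_of_pos (div_pos hc hV) _
  have h3 : t₀ ^ (3 : ℕ) = c / V := by
    rw [ht₀_def, ← Real.rpow_natCast ((c / V) ^ ((1 : ℝ) / 3)) 3,
      ← Real.rpow_mul (div_pos hc hV).le]
    norm_num
  have hceq : c = V * t₀ ^ 3 := by
    field_simp at h3
    linarith [h3]
  have hmble : Measurable fun y : E3 => ‖x - y‖⁻¹ :=
    ((measurable_id.const_sub x).norm).inv
  rw [lintegral_eq_lintegral_meas_lt _
    (Filter.Eventually.of_forall fun y => inv_nonneg.mpr (norm_nonneg _)) hmble.aemeasurable]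
  have hsetm : ∀ t : ℝ, MeasurableSet {y : E3 | t < ‖x - y‖⁻¹} :=
    fun t => measurableSet_lt measurable_const hmble
  have hsplit : (Ioi (0 : ℝ)) = Ioc 0 t₀ ∪ Ioi t₀ := (Ioc_union_Ioi_eq_Ioi ht₀.le).symm
  rw [hsplit, lintegral_union measurableSet_Ioi (Ioc_disjoint_Ioi le_rfl)]
  have h1 : ∫⁻ t in Ioc (0 : ℝ) t₀, (volume.restrict B) {y : E3 | t < ‖x - y‖⁻¹} ≤
      ENNReal.ofReal (V * t₀) := by
    calc ∫⁻ t in Ioc (0 : ℝ) t₀, (volume.restrict B) {y : E3 | t < ‖x - y‖⁻¹}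
        ≤ ∫⁻ _ in Ioc (0 : ℝ) t₀, volume B := by
          refine lintegral_mono fun t => ?_
          rw [Measure.restrict_apply (hsetm t)]
          exact measure_mono inter_subset_right
      _ = volume B * volume (Ioc (0 : ℝ) t₀) := setLIntegral_const _ _
      _ = ENNReal.ofReal (V * t₀) := by
          rw [Real.volume_Ioc, sub_zero, ← ENNReal.ofReal_toReal hBfin.ne, ← hV_def,
            ← ENNReal.ofReal_mul hV.le]
  have h2 : ∫⁻ t in Ioi t₀, (volume.restrict B) {y : E3 | t < ‖x - y‖⁻¹} ≤
      ENNReal.ofReal (c * (t₀ ^ 2)⁻¹ / 2) := by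
    have step : ∀ t ∈ Ioi t₀, (volume.restrict B) {y : E3 | t < ‖x - y‖⁻¹} ≤
        ENNReal.ofReal (c * t ^ (-3 : ℝ)) := by
      intro t ht
      have htpos : 0 < t := ht₀.trans ht
      have hsub : {y : E3 | t < ‖x - y‖⁻¹} ⊆ Metric.ball x t⁻¹ := by
        intro y hy
        simp only [Set.mem_setOf_eq] at hy
        have hy' : ‖x - y‖ < t⁻¹ := by
          rcases eq_or_lt_of_le (norm_nonneg (x - y)) with h | h
          · rw [← h]; exact inv_pos.mpr htpos
          · exact (lt_inv_comm₀ htpos h).mp hy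
        rw [Metric.mem_ball, dist_eq_norm, ← norm_sub_rev]
        exact hy'
      have hrw : c * t⁻¹ ^ 3 = c * t ^ (-3 : ℝ) := by
        rw [show (-3 : ℝ) = -(3 : ℕ) by norm_num, Real.rpow_neg htpos.le,
          Real.rpow_natCast, ← inv_pow]
      calc (volume.restrict B) {y : E3 | t < ‖x - y‖⁻¹}
          ≤ volume (Metric.ball x t⁻¹) := by
            rw [Measure.restrict_apply (hsetm t)]
            exact measure_mono (inter_subset_left.trans hsub)
        _ = ENNReal.ofReal (c * t⁻¹ ^ 3) := E3_ball_vol x t⁻¹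
        _ = ENNReal.ofReal (c * t ^ (-3 : ℝ)) := by rw [hrw]
    have hnn : 0 ≤ᵐ[volume.restrict (Ioi t₀)] fun t : ℝ => t ^ (-3 : ℝ) := by
      filter_upwards [ae_restrict_mem measurableSet_Ioi] with t ht
      exact Real.rpow_nonneg (ht₀.trans ht).le _
    calc ∫⁻ t in Ioi t₀, (volume.restrict B) {y : E3 | t < ‖x - y‖⁻¹}
        ≤ ∫⁻ t in Ioi t₀, ENNReal.ofReal (c * t ^ (-3 : ℝ)) :=
          setLIntegral_mono' measurableSet_Ioi step
      _ = ENNReal.ofReal c * ∫⁻ t in Ioi t₀, ENNReal.ofReal (t ^ (-3 : ℝ)) := by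
          simp_rw [ENNReal.ofReal_mul hc.le]
          exact lintegral_const_mul' _ _ ENNReal.ofReal_ne_top
      _ = ENNReal.ofReal c * ENNReal.ofReal (∫ t in Ioi t₀, t ^ (-3 : ℝ)) := by
          rw [ofReal_integral_eq_lintegral_ofReal
            (integrableOn_Ioi_rpow_of_lt (by norm_num) ht₀) hnn]
      _ = ENNReal.ofReal (c * (t₀ ^ 2)⁻¹ / 2) := by
          rw [integral_Ioi_rpow_of_lt (by norm_num) ht₀, ← ENNReal.ofReal_mul hc.le]
          congr 1
          rw [show (-3 : ℝ) + 1 = -(2 : ℕ) by norm_num, Real.rpow_neg ht₀.le,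
            Real.rpow_natCast]
          ring
  calc (∫⁻ t in Ioc (0 : ℝ) t₀, (volume.restrict B) {y : E3 | t < ‖x - y‖⁻¹}) +
        ∫⁻ t in Ioi t₀, (volume.restrict B) {y : E3 | t < ‖x - y‖⁻¹}
      ≤ ENNReal.ofReal (V * t₀) + ENNReal.ofReal (c * (t₀ ^ 2)⁻¹ / 2) := add_le_add h1 h2
    _ = ENNReal.ofReal (V * t₀ + c * (t₀ ^ 2)⁻¹ / 2) :=
        (ENNReal.ofReal_add (by positivity) (by positivity)).symm
    _ ≤ ENNReal.ofReal ((3 / 2) * (4 / 3 * π) ^ ((1 : ℝ) / 3) * V ^ ((2 : ℝ) / 3)) := by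
        apply ENNReal.ofReal_le_ofReal
        apply le_of_eq
        have hct : c * (t₀ ^ 2)⁻¹ = V * t₀ := by
          rw [hceq]; field_simp
        have hc13 : c ^ ((1 : ℝ) / 3) = V ^ ((1 : ℝ) / 3) * t₀ := by
          rw [hceq, Real.mul_rpow hV.le (by positivity),
            ← Real.rpow_natCast t₀ 3, ← Real.rpow_mul ht₀.le]
          norm_num
        have hV23 : V ^ ((2 : ℝ) / 3) * V ^ ((1 : ℝ) / 3) = V := by
          rw [← Real.rpow_add hV]; norm_num
        rw [hct, ← hc_def, hc13]
        linear_combination (-(3 : ℝ) / 2) * t₀ * hV23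


lemma iterated_bound (A B : Set E3) (hB : MeasurableSet B)
    (hB0 : 0 < volume B) (hBfin : volume B < ⊤) :
    ∫⁻ x in A, ∫⁻ y in B, ENNReal.ofReal ‖x - y‖⁻¹ ≤
      volume A * ENNReal.ofReal ((3 / 2) * (4 / 3 * π) ^ ((1 : ℝ) / 3) *
        (volume B).toReal ^ ((2 : ℝ) / 3)) := by
  calc ∫⁻ x in A, ∫⁻ y in B, ENNReal.ofReal ‖x - y‖⁻¹
      ≤ ∫⁻ _ in A, ENNReal.ofReal ((3 / 2) * (4 / 3 * π) ^ ((1 : ℝ) / 3) *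
          (volume B).toReal ^ ((2 : ℝ) / 3)) :=
        lintegral_mono fun x => inner_bound x B hB hB0 hBfin
    _ = _ := by rw [setLIntegral_const, mul_comm]

/-- Inequality (25-6-67): for measurable sets `G, G′ ⊆ ℝ³` of finite positive
measure, `D(χ_G, χ_{G′}) ≤ 2π·(3/(4π))^(2/3)·|G|·|G′|·(max(|G|,|G′|))^(−1/3)`. -/
theorem coulomb_mixed_energy_bound (G G' : Set E3)
    (hG : MeasurableSet G) (hG' : MeasurableSet G')
    (hG0 : 0 < volume G) (hGfin : volume G < ⊤)
    (hG'0 : 0 < volume G') (hG'fin : volume G' < ⊤) :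
    Dcoul (G.indicator fun _ => (1 : ℝ)) (G'.indicator fun _ => (1 : ℝ)) ≤
      2 * Real.pi * (3 / (4 * Real.pi)) ^ ((2 : ℝ) / 3) *
        (volume G).toReal * (volume G').toReal *
          (max (volume G).toReal (volume G').toReal) ^ (-(1 : ℝ) / 3) := by
  set VG : ℝ := (volume G).toReal with hVG_def
  set VG' : ℝ := (volume G').toReal with hVG'_def
  have hVG : 0 < VG := ENNReal.toReal_pos hG0.ne' hGfin.ne
  have hVG' : 0 < VG' := ENNReal.toReal_pos hG'0.ne' hG'fin.ne
  set K : ℝ := (3 / 2) * (4 / 3 * π) ^ ((1 : ℝ) / 3) with hK_def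
  have hK : 0 < K := by positivity
  -- constant identity
  have hKeq : K = 2 * π * (3 / (4 * π)) ^ ((2 : ℝ) / 3) := by
    set u : ℝ := 3 / (4 * π) with hu_def
    have hu : 0 < u := by positivity
    have h1 : (4 / 3 * π : ℝ) = u⁻¹ := by
      rw [hu_def]; field_simp
    have h2 : (4 / 3 * π : ℝ) ^ ((1 : ℝ) / 3) = (u ^ ((1 : ℝ) / 3))⁻¹ := by
      rw [h1, ← Real.rpow_neg_one u, ← Real.rpow_mul hu.le, ← Real.rpow_neg hu.le]
      norm_num
    have h3 : u ^ ((2 : ℝ) / 3) * u ^ ((1 : ℝ) / 3) = u := by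
      rw [← Real.rpow_add hu]; norm_num
    have h4 : 2 * π * u = 3 / 2 := by
      rw [hu_def]; field_simp; ring
    have h5 : u ^ ((1 : ℝ) / 3) > 0 := Real.rpow_pos_of_pos hu _
    rw [hK_def, h2]
    field_simp
    nlinarith [h3, h4, h5]
  set F : E3 × E3 → ℝ := fun p =>
    (G.indicator (fun _ => (1 : ℝ)) p.1) * (G'.indicator (fun _ => (1 : ℝ)) p.2) *
      ‖p.1 - p.2‖⁻¹ with hF_def
  have hFm : Measurable F := by
    exact (((measurable_const.indicator hG).comp measurable_fst).mul
      ((measurable_const.indicator hG').comp measurable_snd)).mul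
      ((measurable_fst.sub measurable_snd).norm).inv
  have hFnn : 0 ≤ᵐ[volume] F := Filter.Eventually.of_forall fun p => by
    refine mul_nonneg (mul_nonneg ?_ ?_) (inv_nonneg.mpr (norm_nonneg _)) <;>
      exact Set.indicator_nonneg (fun _ _ => zero_le_one) _
  have hD : Dcoul (G.indicator fun _ => (1 : ℝ)) (G'.indicator fun _ => (1 : ℝ)) =
      (∫⁻ p, ENNReal.ofReal (F p)).toReal :=
    integral_eq_lintegral_of_nonneg_ae hFnn hFm.aestronglyMeasurable
  have hptwise : ∀ p : E3 × E3, ENNReal.ofReal (F p) =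
      (G ×ˢ G').indicator (fun p : E3 × E3 => ENNReal.ofReal ‖p.1 - p.2‖⁻¹) p := by
    intro p
    by_cases hx : p.1 ∈ G <;> by_cases hy : p.2 ∈ G' <;>
      simp [hF_def, Set.indicator_apply, hx, hy, Set.mem_prod]
  have hL : (∫⁻ p, ENNReal.ofReal (F p)) =
      ∫⁻ p in G ×ˢ G', ENNReal.ofReal ‖p.1 - p.2‖⁻¹ := by
    simp_rw [hptwise]
    exact lintegral_indicator (hG.prod hG') _
  have hmeas2 : AEMeasurable (fun p : E3 × E3 => ENNReal.ofReal ‖p.1 - p.2‖⁻¹)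
      ((volume.restrict G).prod (volume.restrict G')) :=
    (ENNReal.measurable_ofReal.comp ((measurable_fst.sub measurable_snd).norm).inv).aemeasurable
  have hL1 : ∫⁻ p in G ×ˢ G', ENNReal.ofReal ‖p.1 - p.2‖⁻¹ =
      ∫⁻ x in G, ∫⁻ y in G', ENNReal.ofReal ‖x - y‖⁻¹ := by
    rw [Measure.volume_eq_prod, ← Measure.prod_restrict, lintegral_prod _ hmeas2]
  have hL2 : ∫⁻ p in G ×ˢ G', ENNReal.ofReal ‖p.1 - p.2‖⁻¹ =
      ∫⁻ y in G', ∫⁻ x in G, ENNReal.ofReal ‖x - y‖⁻¹ := by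
    rw [Measure.volume_eq_prod, ← Measure.prod_restrict, lintegral_prod_symm _ hmeas2]
  have bound1 : (∫⁻ p, ENNReal.ofReal (F p)) ≤
      ENNReal.ofReal (VG * (K * VG' ^ ((2 : ℝ) / 3))) := by
    rw [hL, hL1]
    calc ∫⁻ x in G, ∫⁻ y in G', ENNReal.ofReal ‖x - y‖⁻¹
        ≤ volume G * ENNReal.ofReal (K * VG' ^ ((2 : ℝ) / 3)) :=
          iterated_bound G G' hG' hG'0 hG'fin
      _ = ENNReal.ofReal (VG * (K * VG' ^ ((2 : ℝ) / 3))) := by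
          rw [← ENNReal.ofReal_toReal hGfin.ne, ← hVG_def, ← ENNReal.ofReal_mul hVG.le]
  have bound2 : (∫⁻ p, ENNReal.ofReal (F p)) ≤
      ENNReal.ofReal (VG' * (K * VG ^ ((2 : ℝ) / 3))) := by
    rw [hL, hL2]
    have hrev : ∀ y : E3, (∫⁻ x in G, ENNReal.ofReal ‖x - y‖⁻¹) =
        ∫⁻ x in G, ENNReal.ofReal ‖y - x‖⁻¹ := fun y => by simp_rw [norm_sub_rev]
    calc ∫⁻ y in G', ∫⁻ x in G, ENNReal.ofReal ‖x - y‖⁻¹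
        = ∫⁻ y in G', ∫⁻ x in G, ENNReal.ofReal ‖y - x‖⁻¹ := by simp_rw [hrev]
      _ ≤ volume G' * ENNReal.ofReal (K * VG ^ ((2 : ℝ) / 3)) :=
          iterated_bound G' G hG hG0 hGfin
      _ = ENNReal.ofReal (VG' * (K * VG ^ ((2 : ℝ) / 3))) := by
          rw [← ENNReal.ofReal_toReal hG'fin.ne, ← hVG'_def, ← ENNReal.ofReal_mul hVG'.le]
  rw [hD]
  rcases le_total VG VG' with hle | hle
  · have hmax : max VG VG' = VG' := max_eq_right hle
    have hpow : VG' * VG' ^ (-(1 : ℝ) / 3) = VG' ^ ((2 : ℝ) / 3) := by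
      nth_rewrite 1 [← Real.rpow_one VG']
      rw [← Real.rpow_add hVG']; norm_num
    have key : 2 * π * (3 / (4 * π)) ^ ((2 : ℝ) / 3) * VG * VG' *
        (max VG VG') ^ (-(1 : ℝ) / 3) = VG * (K * VG' ^ ((2 : ℝ) / 3)) := by
      rw [hmax, hKeq]
      linear_combination (2 * π * (3 / (4 * π)) ^ ((2 : ℝ) / 3) * VG) * hpow
    rw [key]
    exact ENNReal.toReal_le_of_le_ofReal (by positivity) bound1
  · have hmax : max VG VG' = VG := max_eq_left hle
    have hpow : VG * VG ^ (-(1 : ℝ) / 3) = VG ^ ((2 : ℝ) / 3) := by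
      nth_rewrite 1 [← Real.rpow_one VG]
      rw [← Real.rpow_add hVG]; norm_num
    have key : 2 * π * (3 / (4 * π)) ^ ((2 : ℝ) / 3) * VG * VG' *
        (max VG VG') ^ (-(1 : ℝ) / 3) = VG' * (K * VG ^ ((2 : ℝ) / 3)) := by
      rw [hmax, hKeq]
      linear_combination (2 * π * (3 / (4 * π)) ^ ((2 : ℝ) / 3) * VG') * hpow
    rw [key]
    exact ENNReal.toReal_le_of_le_ofReal (by positivity) bound2
end

section
/- Let w : E → ℝ be differentiable with w(x) ≥ 0 for every x ∈ E, and let K ≥ 0 be a constant such that w(y) ≤ w(x) + Dw(x)(y − x) + K·‖y − x‖² for all x, y ∈ E. Then ‖∇w(x)‖² ≤ 4·K·w(x) for every x ∈ E. (Glaeser-type gradient bound for nonnegative functions, used in the proof of Proposition 5.1 to obtain |∇w| ≤ c·w^(1/2).) -/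
/-! Restricting the upper bound to the line `t ↦ x - t • g` through `x` in the direction of the
gradient `g` gives `0 ≤ w x - t ‖g‖² + K t² ‖g‖²` for every real `t`, since `w ≥ 0`. A quadratic in
`t` that is nonnegative everywhere has nonpositive discriminant, i.e. `‖g‖⁴ ≤ 4 K ‖g‖² w x`. -/

theorem norm_sq_le_four_mul_of_le_add_inner {E : Type*} [NormedAddCommGroup E]
    [InnerProductSpace ℝ E] {f : E → ℝ} (hf0 : ∀ y, 0 ≤ f y) {K : ℝ}
    (hK : 0 ≤ K) {x g : E} (hf : ∀ y, f y ≤ f x + inner ℝ g (y - x) + K * ‖y - x‖ ^ 2) :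
    ‖g‖ ^ 2 ≤ 4 * K * f x := by
  have hline : ∀ t : ℝ, 0 ≤ (K * ‖g‖ ^ 2) * (t * t) + (-‖g‖ ^ 2) * t + f x := by
    intro t
    have h := hf (x - t • g)
    rw [sub_sub_cancel_left, inner_neg_right, real_inner_smul_right, real_inner_self_eq_norm_sq,
      norm_neg, norm_smul, Real.norm_eq_abs, mul_pow, sq_abs] at h
    linarith [hf0 (x - t • g)]
  have hdiscrim := discrim_le_zero hline
  rw [discrim] at hdiscrim
  rcases (sq_nonneg ‖g‖).eq_or_lt with hg | hg
  · rw [← hg]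
    exact mul_nonneg (by positivity) (hf0 x)
  · nlinarith

theorem gradient_sq_le_of_nonneg_general {E : Type*} [NormedAddCommGroup E]
    [InnerProductSpace ℝ E] [CompleteSpace E]
    (w : E → ℝ) (hw0 : ∀ x, 0 ≤ w x)
    (K : ℝ) (hK : 0 ≤ K)
    (htaylor : ∀ x y, w y ≤ w x + fderiv ℝ w x (y - x) + K * ‖y - x‖ ^ 2) :
    ∀ x, ‖gradient w x‖ ^ 2 ≤ 4 * K * w x := fun x ↦
  norm_sq_le_four_mul_of_le_add_inner hw0 hK fun y ↦ by
    simpa only [inner_gradient_left] using htaylor x y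

/-- Glaeser-type gradient bound for nonnegative functions (used in the proof of
Proposition 5.1): if `w ≥ 0` is differentiable and
`w(y) ≤ w(x) + Dw(x)(y − x) + K·‖y − x‖²` for all `x, y`, then
`‖∇w(x)‖² ≤ 4·K·w(x)` everywhere. -/
theorem gradient_sq_le_of_nonneg {E : Type*} [NormedAddCommGroup E]
    [InnerProductSpace ℝ E] [CompleteSpace E]
    (w : E → ℝ) (hw : Differentiable ℝ w) (hw0 : ∀ x, 0 ≤ w x)
    (K : ℝ) (hK : 0 ≤ K)
    (htaylor : ∀ x y, w y ≤ w x + fderiv ℝ w x (y - x) + K * ‖y - x‖ ^ 2) :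
    ∀ x, ‖gradient w x‖ ^ 2 ≤ 4 * K * w x :=
  gradient_sq_le_of_nonneg_general w hw0 K hK htaylor
end

section
/- Let w : E → ℝ be twice differentiable with w(x) ≥ 0 for every x ∈ E, and let M ≥ 0 be a constant such that w(y) ≤ w(x) + Dw(x)(y − x) + (1/2)·D²w(x)(y − x, y − x) + M·‖y − x‖³ for all x, y ∈ E. Then for every x ∈ E and every unit vector v ∈ E one has D²w(x)(v, v) ≥ −(54·M²·w(x))^(1/3). (Lower bound on the Hessian eigenvalues of a nonnegative function with cubic Taylor remainder; step (25-5-8) in the proof of Proposition 5.1.) -/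
/-- Lower bound on the Hessian eigenvalues of a nonnegative function with cubic
Taylor remainder (step (25-5-8) in the proof of Proposition 5.1): if `w ≥ 0` is
twice differentiable and
`w(y) ≤ w(x) + Dw(x)(y−x) + (1/2)·D²w(x)(y−x, y−x) + M·‖y−x‖³` for all `x, y`,
then `D²w(x)(v, v) ≥ −(54·M²·w(x))^(1/3)` for every unit vector `v`. -/
theorem hessian_lower_bound_cubic_remainder {E : Type*} [NormedAddCommGroup E]
    [InnerProductSpace ℝ E]
    (w : E → ℝ) (hw : Differentiable ℝ w)
    (hw' : Differentiable ℝ (fderiv ℝ w))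
    (hw0 : ∀ x, 0 ≤ w x) (M : ℝ) (hM : 0 ≤ M)
    (htaylor : ∀ x y, w y ≤ w x + fderiv ℝ w x (y - x)
      + (1 / 2) * fderiv ℝ (fderiv ℝ w) x (y - x) (y - x) + M * ‖y - x‖ ^ 3) :
    ∀ x v, ‖v‖ = 1 →
      -((54 * M ^ 2 * w x) ^ ((1 : ℝ) / 3)) ≤ fderiv ℝ (fderiv ℝ w) x v v := by
  intro x v hv
  set A := fderiv ℝ (fderiv ℝ w) x v v with hA
  have key : ∀ t : ℝ, 0 ≤ t → 0 ≤ 2 * w x + t ^ 2 * A + 2 * M * t ^ 3 := by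
    intro t ht
    have h1 := htaylor x (x + t • v)
    have h2 := htaylor x (x - t • v)
    have e1 : x + t • v - x = t • v := by abel
    have e2 : x - t • v - x = -(t • v) := by abel
    rw [e1] at h1
    rw [e2] at h2
    have hn : ‖t • v‖ = t := by
      rw [norm_smul, hv, mul_one, Real.norm_eq_abs, abs_of_nonneg ht]
    rw [hn] at h1
    rw [norm_neg, hn] at h2
    have happ : fderiv ℝ (fderiv ℝ w) x (t • v) (t • v) = t ^ 2 * A := by
      rw [(fderiv ℝ (fderiv ℝ w) x).map_smul, ContinuousLinearMap.smul_apply,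
        (fderiv ℝ (fderiv ℝ w) x v).map_smul, smul_eq_mul, smul_eq_mul]
      rw [hA]; ring
    have happ' : fderiv ℝ (fderiv ℝ w) x (-(t • v)) (-(t • v)) = t ^ 2 * A := by
      rw [(fderiv ℝ (fderiv ℝ w) x).map_neg, ContinuousLinearMap.neg_apply,
        (fderiv ℝ (fderiv ℝ w) x (t • v)).map_neg, neg_neg, happ]
    have hlin : fderiv ℝ w x (-(t • v)) = -(fderiv ℝ w x (t • v)) := map_neg _ _
    rw [happ] at h1
    rw [happ', hlin] at h2
    have h0 := hw0 (x + t • v)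
    have h0' := hw0 (x - t • v)
    nlinarith [h1, h2, h0, h0']
  have h0x := hw0 x
  have hrpow_nonneg : 0 ≤ (54 * M ^ 2 * w x) ^ ((1 : ℝ) / 3) :=
    Real.rpow_nonneg (by positivity) _
  rcases le_or_gt 0 A with hA0 | hA0
  · linarith
  · -- A < 0
    rcases eq_or_lt_of_le hM with hM0 | hM0
    · -- M = 0 : contradiction
      exfalso
      set t := Real.sqrt ((2 * w x + 1) / (-A)) with htdef
      have ht : 0 ≤ t := Real.sqrt_nonneg _
      have hnA : 0 < -A := by linarith
      have ht2 : t ^ 2 = (2 * w x + 1) / (-A) := by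
        rw [htdef, Real.sq_sqrt]
        have h0x := hw0 x
        exact div_nonneg (by linarith) (le_of_lt hnA)
      have hk := key t ht
      rw [← hM0] at hk
      have hAne : A ≠ 0 := ne_of_lt hA0
      have : t ^ 2 * A = -(2 * w x + 1) := by
        rw [ht2]
        field_simp
      nlinarith [hk, this]
    · -- M > 0
      set t := -A / (3 * M) with htdef
      have ht : 0 ≤ t := div_nonneg (by linarith) (by linarith)
      have hk := key t ht
      have hA3 : (-A) ^ 3 ≤ 54 * M ^ 2 * w x := by
        have expand : 2 * w x + t ^ 2 * A + 2 * M * t ^ 3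
            = 2 * w x + A ^ 3 / (27 * M ^ 2) := by
          rw [htdef]
          field_simp
          ring
        rw [expand] at hk
        have hMne : M ≠ 0 := ne_of_gt hM0
        have h27 : 27 * M ^ 2 * (2 * w x + A ^ 3 / (27 * M ^ 2))
            = 54 * M ^ 2 * w x + A ^ 3 := by
          field_simp
          ring
        have h := mul_nonneg (by positivity : (0:ℝ) ≤ 27 * M ^ 2) hk
        rw [h27] at h
        have hcube : (-A) ^ 3 = -A ^ 3 := by ring
        linarith
      have hnegA : 0 ≤ -A := by linarith
      have hle := Real.rpow_le_rpow (by positivity) hA3 (by norm_num : (0:ℝ) ≤ 1/3)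
      have hid : ((-A) ^ 3) ^ ((1 : ℝ) / 3) = -A := by
        rw [← Real.rpow_natCast (-A) 3, ← Real.rpow_mul hnegA]
        norm_num
      rw [hid] at hle
      linarith
end

section
/- Let w : E → ℝ be three times differentiable with w(x) ≥ 0 for every x ∈ E, and let M ≥ 0 be a constant such that w(y) ≤ w(x) + Dw(x)(y − x) + (1/2)·D²w(x)(y − x, y − x) + (1/6)·D³w(x)(y − x, y − x, y − x) + M·‖y − x‖⁴ for all x, y ∈ E. Then for every x ∈ E and every unit vector v ∈ E one has D²w(x)(v, v) ≥ −4·(M·w(x))^(1/2). (Lower bound on the Hessian eigenvalues of a nonnegative function with quartic Taylor remainder; step (25-5-9) in the proof of Proposition 5.1.) -/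
/-!
Sum the quartic Taylor bound at `x + u` and at `x - u`: the odd-order terms cancel and, since
`w ≥ 0`, `0 ≤ 2 w(x) + D²w(x)(u, u) + 2 M ‖u‖⁴`. With `u = √s • v` for a unit vector `v` this says
that the quadratic `2M s² + D²w(x)(v, v) s + 2 w(x)` is nonnegative for `s ≥ 0`, hence (when its
middle coefficient is negative) everywhere, so its discriminant is nonpositive.
-/

open Real

theorem neg_two_sqrt_le_of_quadratic_nonneg {a b c : ℝ} (ha : 0 ≤ a)
    (h : ∀ s, 0 ≤ s → 0 ≤ a * (s * s) + b * s + c) : -(2 * √(a * c)) ≤ b := by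
  rcases le_or_gt 0 b with hb | hb
  · linarith [sqrt_nonneg (a * c)]
  have hc : 0 ≤ c := by simpa using h 0 le_rfl
  have hquad : ∀ s, 0 ≤ a * (s * s) + b * s + c := by
    intro s
    rcases le_or_gt 0 s with hs | hs
    · exact h s hs
    · nlinarith [mul_nonneg ha (mul_self_nonneg s)]
  have hdisc : b ^ 2 ≤ 4 * a * c := by
    simpa [discrim, sub_nonpos] using discrim_le_zero hquad
  have hsq : √(a * c) ^ 2 = a * c := sq_sqrt (mul_nonneg ha hc)
  nlinarith [sqrt_nonneg (a * c)]

theorem add_add_sub_le_of_quartic_taylor {E : Type*} [NormedAddCommGroup E] [NormedSpace ℝ E]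
    {f : E → ℝ} {x : E} {L₁ : E →L[ℝ] ℝ} {L₂ : E →L[ℝ] E →L[ℝ] ℝ}
    {L₃ : E →L[ℝ] E →L[ℝ] E →L[ℝ] ℝ} {M : ℝ}
    (h : ∀ y, f y ≤ f x + L₁ (y - x) + (1 / 2) * L₂ (y - x) (y - x)
      + (1 / 6) * L₃ (y - x) (y - x) (y - x) + M * ‖y - x‖ ^ 4) (u : E) :
    f (x + u) + f (x - u) ≤ 2 * f x + L₂ u u + 2 * M * ‖u‖ ^ 4 := by
  have hplus := h (x + u)
  have hminus := h (x - u)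
  simp only [add_sub_cancel_left, sub_sub_cancel_left, map_neg, neg_apply,
    neg_neg, norm_neg] at hplus hminus
  linarith

theorem hessian_lower_bound_quartic_remainder_general {E : Type*} [NormedAddCommGroup E]
    [InnerProductSpace ℝ E]
    (w : E → ℝ)
    (hw0 : ∀ x, 0 ≤ w x) (M : ℝ) (hM : 0 ≤ M)
    (htaylor : ∀ x y, w y ≤ w x + fderiv ℝ w x (y - x)
      + (1 / 2) * fderiv ℝ (fderiv ℝ w) x (y - x) (y - x)
      + (1 / 6) * fderiv ℝ (fderiv ℝ (fderiv ℝ w)) x (y - x) (y - x) (y - x)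
      + M * ‖y - x‖ ^ 4) :
    ∀ x v, ‖v‖ = 1 →
      -(4 * (M * w x) ^ ((1 : ℝ) / 2)) ≤ fderiv ℝ (fderiv ℝ w) x v v := by
  intro x v hv
  have hquad : ∀ s, 0 ≤ s →
      0 ≤ 2 * M * (s * s) + fderiv ℝ (fderiv ℝ w) x v v * s + 2 * w x := by
    intro s hs
    have hsum := add_add_sub_le_of_quartic_taylor (htaylor x) (√s • v)
    have hnorm : ‖√s • v‖ ^ 4 = s * s := by
      rw [norm_smul, hv, mul_one, norm_of_nonneg (sqrt_nonneg s),
        show (4 : ℕ) = 2 * 2 from rfl, pow_mul, sq_sqrt hs, sq]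
    simp only [map_smul, smul_apply, smul_eq_mul, hnorm,
      ← mul_assoc, mul_self_sqrt hs] at hsum
    linarith [hw0 (x + √s • v), hw0 (x - √s • v)]
  have hbound := neg_two_sqrt_le_of_quadratic_nonneg (by positivity) hquad
  rw [show 2 * M * (2 * w x) = 2 ^ 2 * (M * w x) by ring, sqrt_mul (by norm_num),
    sqrt_sq (by norm_num)] at hbound
  rw [← sqrt_eq_rpow]
  linarith

/-- Lower bound on the Hessian eigenvalues of a nonnegative function with
quartic Taylor remainder (step (25-5-9) in the proof of Proposition 5.1): if
`w ≥ 0` is three times differentiable and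
`w(y) ≤ w(x) + Dw(x)(y−x) + (1/2)·D²w(x)(y−x,y−x) + (1/6)·D³w(x)(y−x,y−x,y−x)
  + M·‖y−x‖⁴` for all `x, y`,
then `D²w(x)(v, v) ≥ −4·(M·w(x))^(1/2)` for every unit vector `v`. -/
theorem hessian_lower_bound_quartic_remainder {E : Type*} [NormedAddCommGroup E]
    [InnerProductSpace ℝ E]
    (w : E → ℝ) (hw : Differentiable ℝ w)
    (hw' : Differentiable ℝ (fderiv ℝ w))
    (hw'' : Differentiable ℝ (fderiv ℝ (fderiv ℝ w)))
    (hw0 : ∀ x, 0 ≤ w x) (M : ℝ) (hM : 0 ≤ M)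
    (htaylor : ∀ x y, w y ≤ w x + fderiv ℝ w x (y - x)
      + (1 / 2) * fderiv ℝ (fderiv ℝ w) x (y - x) (y - x)
      + (1 / 6) * fderiv ℝ (fderiv ℝ (fderiv ℝ w)) x (y - x) (y - x) (y - x)
      + M * ‖y - x‖ ^ 4) :
    ∀ x v, ‖v‖ = 1 →
      -(4 * (M * w x) ^ ((1 : ℝ) / 2)) ≤ fderiv ℝ (fderiv ℝ w) x v v :=
  hessian_lower_bound_quartic_remainder_general w hw0 M hM htaylor
end

section
/- Let γ : Ω → ℝ be three times continuously differentiable with γ > 0 on Ω, let a > 0, b > 0 be constants and 0 ≤ σ ≤ 1, and assume the identity a·‖∇γ‖² + b·γ·Δγ = γ^σ holds at every point of Ω. If the function ψ := ‖∇γ‖² attains a local maximum at an interior point x₀ ∈ Ω, then a·‖∇γ(x₀)‖² ≤ γ(x₀)^σ. (Interior maximum-principle bound (25-5-11)–(25-5-12) used in the proof of Proposition 5.1.) -/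
/-!
At an interior maximum `x₀` of `ψ = ‖∇γ‖²` the second derivative of `ψ` is nonpositive in every
direction. Since `D²ψ(v, v) = 2 ‖D²γ v‖² + 2 D³γ(v, v, ∇γ)`, this gives `D³γ(v, v, ∇γ) ≤ 0`,
and summing over an orthonormal basis with the symmetry of `D³γ`, `⟪∇(Δγ), ∇γ⟫ ≤ 0` at `x₀`.
Differentiating the identity `a ψ + b γ Δγ = γ^σ` along `∇γ(x₀)`, where `∇ψ(x₀) = 0`, gives
`b (Δγ ‖∇γ‖² + γ ⟪∇(Δγ), ∇γ⟫) = σ γ^(σ-1) ‖∇γ‖² ≥ 0`. Hence `Δγ(x₀) ≥ 0` unless `∇γ(x₀) = 0`,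
and in both cases `a ‖∇γ(x₀)‖² = γ^σ - b γ Δγ ≤ γ^σ`.
-/

open Filter Topology Set ContinuousLinearMap InnerProductSpace

/-- The Laplacian of a function on `ℝ³`: the trace of its second derivative,
i.e. the sum of its pure second partial derivatives. -/
noncomputable def lap (u : E3 → ℝ) (x : E3) : ℝ :=
  ∑ i : Fin 3,
    fderiv ℝ (fderiv ℝ u) x (EuclideanSpace.single i 1) (EuclideanSpace.single i 1)

theorem IsLocalMax.hasDerivAt_deriv_nonpos {φ φ' : ℝ → ℝ} {t c : ℝ} (h : IsLocalMax φ t)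
    (hφ : ∀ᶠ s in 𝓝 t, HasDerivAt φ (φ' s) s) (hφ' : HasDerivAt φ' c t) : c ≤ 0 := by
  by_contra! hc
  have hcrit : φ' t = 0 := h.hasDerivAt_eq_zero hφ.self_of_nhds
  have hpos : ∀ᶠ s in 𝓝[>] t, 0 < φ' s := by
    filter_upwards [nhdsGT_le_nhdsNE t <|
      (hasDerivAt_iff_tendsto_slope.1 hφ').eventually (eventually_gt_nhds hc),
      self_mem_nhdsWithin] with s hs hts
    exact pos_of_slope_pos hts hs hcrit
  obtain ⟨l, u, ⟨hlt, htu⟩, hnear⟩ := mem_nhds_iff_exists_Ioo_subset.1 (hφ.and h)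
  obtain ⟨u', htu', hright⟩ := mem_nhdsGT_iff_exists_Ioo_subset.1 hpos
  obtain ⟨s, hts, hsu⟩ := exists_between (lt_min htu htu')
  have hIcc : Icc t s ⊆ Ioo l u := fun y hy =>
    ⟨hlt.trans_le hy.1, hy.2.trans_lt (hsu.trans_le (min_le_left _ _))⟩
  obtain ⟨ξ, hξ, hslope⟩ := exists_hasDerivAt_eq_slope φ φ' hts
    (fun y hy => (hnear (hIcc hy)).1.continuousAt.continuousWithinAt)
    (fun y hy => (hnear (hIcc (Ioo_subset_Icc_self hy))).1)
  have hξpos : 0 < φ' ξ := hright ⟨hξ.1, hξ.2.trans (hsu.trans_le (min_le_right _ _))⟩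
  have hle : φ s ≤ φ t := (hnear (hIcc (right_mem_Icc.2 hts.le))).2
  rw [hslope, div_pos_iff_of_pos_right (sub_pos.2 hts)] at hξpos
  linarith

section NormedSpace

variable {E G : Type*} [NormedAddCommGroup E] [NormedSpace ℝ E]
  [NormedAddCommGroup G] [NormedSpace ℝ G]

theorem IsLocalMax.hasFDerivAt_fderiv_apply_self_nonpos {f : E → ℝ} {f' : E → E →L[ℝ] ℝ}
    {ℓ : E →L[ℝ] ℝ} {x v : E} (h : IsLocalMax f x) (hf : ∀ᶠ y in 𝓝 x, HasFDerivAt f (f' y) y)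
    (hv : HasFDerivAt (fun y => f' y v) ℓ x) : ℓ v ≤ 0 := by
  have hline (s : ℝ) : HasDerivAt (fun s : ℝ => x + s • v) v s := by
    simpa using ((hasDerivAt_id s).smul_const v).const_add x
  have hto : Tendsto (fun s : ℝ => x + s • v) (𝓝 0) (𝓝 x) := by
    simpa using (hline 0).continuousAt.tendsto
  have hv₀ : HasFDerivAt (fun y => f' y v) ℓ (x + (0 : ℝ) • v) := by simpa using hv
  refine IsLocalMax.hasDerivAt_deriv_nonpos (φ := fun s => f (x + s • v))
    (φ' := fun s => f' (x + s • v) v) (t := 0) ?_ ?_ ?_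
  · simpa [IsLocalMax, IsMaxFilter] using hto.eventually h
  · filter_upwards [hto.eventually hf] with s hs using hs.comp_hasDerivAt s (hline s)
  · exact hv₀.comp_hasDerivAt 0 (hline 0)

variable {f : E → G} {x : E}

theorem ContDiffAt.hasFDerivAt_fderiv_fderiv (hf : ContDiffAt ℝ 3 f x) :
    HasFDerivAt (fderiv ℝ (fderiv ℝ f)) (fderiv ℝ (fderiv ℝ (fderiv ℝ f)) x) x :=
  (((hf.fderiv_right (m := 2) (by norm_num)).fderiv_right (m := 1) (by norm_num))
    |>.differentiableAt (by norm_num)).hasFDerivAt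

theorem ContDiffAt.fderiv_fderiv_fderiv_swap_left (hf : ContDiffAt ℝ 3 f x) (u v w : E) :
    fderiv ℝ (fderiv ℝ (fderiv ℝ f)) x u v w = fderiv ℝ (fderiv ℝ (fderiv ℝ f)) x v u w := by
  rw [(hf.fderiv_right (m := 2) (by norm_num)).isSymmSndFDerivAt (by simp) u v]

theorem ContDiffAt.fderiv_fderiv_fderiv_swap_right (hf : ContDiffAt ℝ 3 f x) (u v w : E) :
    fderiv ℝ (fderiv ℝ (fderiv ℝ f)) x u v w = fderiv ℝ (fderiv ℝ (fderiv ℝ f)) x u w v := by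
  have happly (v w : E) :=
    (hf.hasFDerivAt_fderiv_fderiv.clm_apply (hasFDerivAt_const v x)).clm_apply
      (hasFDerivAt_const w x)
  have hsymm : (fun y => fderiv ℝ (fderiv ℝ f) y v w) =ᶠ[𝓝 x]
      fun y => fderiv ℝ (fderiv ℝ f) y w v := by
    filter_upwards [hf.eventually (by simp)] with y hy
    exact hy.isSymmSndFDerivAt (by norm_num) v w
  simpa using congrArg (· u) ((happly v w).unique ((happly w v).congr_of_eventuallyEq hsymm))

theorem IsLocalMax.mul_fderiv_mul_eq_fderiv_rpow {γ L ψ : E → ℝ} {a b σ : ℝ}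
    (hψ : IsLocalMax ψ x) (hψd : DifferentiableAt ℝ ψ x) (hγ : DifferentiableAt ℝ γ x)
    (hγx : γ x ≠ 0) (hL : DifferentiableAt ℝ L x)
    (hid : ∀ᶠ y in 𝓝 x, a * ψ y + b * γ y * L y = γ y ^ σ) (w : E) :
    b * (fderiv ℝ γ x w * L x + γ x * fderiv ℝ L x w) = σ * γ x ^ (σ - 1) * fderiv ℝ γ x w := by
  have hlhs := (hψd.hasFDerivAt.const_mul a).add ((hγ.hasFDerivAt.const_mul b).mul hL.hasFDerivAt)
  have hrhs := (hγ.hasFDerivAt.rpow_const (p := σ) (Or.inl hγx)).congr_of_eventuallyEq hid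
  have hw := congrArg (· w) (hlhs.unique hrhs)
  simp only [hψ.fderiv_eq_zero, add_apply, smul_apply, smul_eq_mul, zero_apply, mul_zero,
    zero_add] at hw
  linarith

end NormedSpace

section InnerProductSpace

variable {F : Type*} [NormedAddCommGroup F] [InnerProductSpace ℝ F] [CompleteSpace F]
  {γ : F → ℝ} {x : F}

theorem HasFDerivAt.hasFDerivAt_gradient {D : F →L[ℝ] StrongDual ℝ F}
    (h : HasFDerivAt (fderiv ℝ γ) D x) :
    HasFDerivAt (gradient γ)
      ((toDual ℝ F).symm.toContinuousLinearEquiv.toContinuousLinearMap ∘L D) x :=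
  (toDual ℝ F).symm.toContinuousLinearEquiv.hasFDerivAt.comp x h

theorem hasFDerivAt_norm_gradient_sq (h : DifferentiableAt ℝ (fderiv ℝ γ) x) :
    HasFDerivAt (fun y => ‖gradient γ y‖ ^ 2)
      ((2 : ℝ) • (fderiv ℝ (fderiv ℝ γ) x).flip (gradient γ x)) x := by
  refine h.hasFDerivAt.hasFDerivAt_gradient.norm_sq.congr_fderiv ?_
  ext u
  simp only [smul_apply, comp_apply, innerSL_apply_apply, flip_apply,
    ContinuousLinearEquiv.coe_coe, LinearIsometryEquiv.coe_toContinuousLinearEquiv]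
  rw [real_inner_comm, toDual_symm_apply, two_smul, two_smul]

theorem IsLocalMax.fderiv_fderiv_fderiv_apply_gradient_nonpos (hγ : ContDiffAt ℝ 3 γ x)
    (hmax : IsLocalMax (fun y => ‖gradient γ y‖ ^ 2) x) (v : F) :
    fderiv ℝ (fderiv ℝ (fderiv ℝ γ)) x v v (gradient γ x) ≤ 0 := by
  have hD2 : ∀ᶠ y in 𝓝 x, DifferentiableAt ℝ (fderiv ℝ γ) y := by
    filter_upwards [hγ.eventually (by simp)] with y hy
    exact (hy.fderiv_right (m := 2) (by norm_num)).differentiableAt (by norm_num)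
  have hdir := ((hγ.hasFDerivAt_fderiv_fderiv.clm_apply (hasFDerivAt_const v x)).clm_apply
    hD2.self_of_nhds.hasFDerivAt.hasFDerivAt_gradient).const_smul (2 : ℝ)
  replace hdir : HasFDerivAt
      (fun y => ((2 : ℝ) • (fderiv ℝ (fderiv ℝ γ) y).flip (gradient γ y)) v) _ x :=
    hdir.congr_of_eventuallyEq (.of_forall fun y => by simp)
  have hsecond := hmax.hasFDerivAt_fderiv_apply_self_nonpos
    (hD2.mono fun y hy => hasFDerivAt_norm_gradient_sq hy) hdir
  have hsq : 0 ≤ fderiv ℝ (fderiv ℝ γ) x v ((toDual ℝ F).symm (fderiv ℝ (fderiv ℝ γ) x v)) := by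
    rw [← toDual_symm_apply]
    exact real_inner_self_nonneg
  simp only [LinearIsometryEquiv.toContinuousLinearEquiv_symm, comp_zero, zero_add, smul_add,
    add_apply, smul_apply, comp_apply, ContinuousLinearEquiv.coe_coe,
    LinearIsometryEquiv.coe_symm_toContinuousLinearEquiv, smul_eq_mul, flip_apply] at hsecond
  linarith

end InnerProductSpace

section Laplacian

variable {γ : E3 → ℝ} {x : E3}

theorem ContDiffAt.hasFDerivAt_lap (hγ : ContDiffAt ℝ 3 γ x) :
    HasFDerivAt (lap γ) (∑ i : Fin 3, fderiv ℝ (fderiv ℝ (fderiv ℝ γ)) x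
      (EuclideanSpace.single i 1) (EuclideanSpace.single i 1)) x := by
  refine (HasFDerivAt.fun_sum fun i _ =>
    (hγ.hasFDerivAt_fderiv_fderiv.clm_apply (hasFDerivAt_const (EuclideanSpace.single i 1) x))
      |>.clm_apply (hasFDerivAt_const (EuclideanSpace.single i 1) x)).congr_fderiv ?_
  ext w
  simp [hγ.fderiv_fderiv_fderiv_swap_left w, hγ.fderiv_fderiv_fderiv_swap_right _ w]

theorem IsLocalMax.fderiv_lap_gradient_nonpos (hγ : ContDiffAt ℝ 3 γ x)
    (hmax : IsLocalMax (fun y => ‖gradient γ y‖ ^ 2) x) :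
    fderiv ℝ (lap γ) x (gradient γ x) ≤ 0 := by
  rw [hγ.hasFDerivAt_lap.fderiv, sum_apply]
  exact Finset.sum_nonpos fun i _ => hmax.fderiv_fderiv_fderiv_apply_gradient_nonpos hγ _

end Laplacian

theorem interior_max_gradient_bound_general (Ω : Set E3) (hΩ : IsOpen Ω)
    (γ : E3 → ℝ) (hγ : ContDiffOn ℝ 3 γ Ω) (hpos : ∀ x ∈ Ω, 0 < γ x)
    (a b σ : ℝ) (hb : 0 < b) (hσ0 : 0 ≤ σ)
    (hid : ∀ x ∈ Ω, a * ‖gradient γ x‖ ^ 2 + b * γ x * lap γ x = γ x ^ σ)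
    (x₀ : E3) (hx₀ : x₀ ∈ Ω)
    (hmax : IsLocalMaxOn (fun x => ‖gradient γ x‖ ^ 2) Ω x₀) :
    a * ‖gradient γ x₀‖ ^ 2 ≤ γ x₀ ^ σ := by
  have hΩx : Ω ∈ 𝓝 x₀ := hΩ.mem_nhds hx₀
  have hγx : ContDiffAt ℝ 3 γ x₀ := hγ.contDiffAt hΩx
  have hmax' := hmax.isLocalMax hΩx
  have hγ₀ : 0 < γ x₀ := hpos x₀ hx₀
  have hψd := (hasFDerivAt_norm_gradient_sq
    ((hγx.fderiv_right (m := 2) (by norm_num)).differentiableAt (by norm_num))).differentiableAt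
  have hbochner := hmax'.fderiv_lap_gradient_nonpos hγx
  have hdiff := hmax'.mul_fderiv_mul_eq_fderiv_rpow hψd (hγx.differentiableAt (by norm_num))
    hγ₀.ne' hγx.hasFDerivAt_lap.differentiableAt (eventually_of_mem hΩx hid) (gradient γ x₀)
  rw [← inner_gradient_left, real_inner_self_eq_norm_sq] at hdiff
  have hrhs : 0 ≤ σ * γ x₀ ^ (σ - 1) * ‖gradient γ x₀‖ ^ 2 := by positivity
  rcases (sq_nonneg ‖gradient γ x₀‖).eq_or_lt with hzero | hgrad
  · rw [← hzero, mul_zero]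
    positivity
  · have hbL : 0 ≤ b * lap γ x₀ := nonneg_of_mul_nonneg_left (a := b * lap γ x₀) (by
      nlinarith [mul_nonpos_of_nonneg_of_nonpos (mul_nonneg hb.le hγ₀.le) hbochner]) hgrad
    nlinarith [hid x₀ hx₀, mul_nonneg hbL hγ₀.le]

/-- Interior maximum-principle bound ((25-5-11)–(25-5-12) in the proof of
Proposition 5.1): if `γ > 0` is `C³` on an open set `Ω ⊆ ℝ³`, `a, b > 0`,
`0 ≤ σ ≤ 1`, the identity `a·‖∇γ‖² + b·γ·Δγ = γ^σ` holds on `Ω`, and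
`ψ = ‖∇γ‖²` attains a local maximum (within `Ω`) at `x₀ ∈ Ω`, then
`a·‖∇γ(x₀)‖² ≤ γ(x₀)^σ`. -/
theorem interior_max_gradient_bound (Ω : Set E3) (hΩ : IsOpen Ω)
    (γ : E3 → ℝ) (hγ : ContDiffOn ℝ 3 γ Ω) (hpos : ∀ x ∈ Ω, 0 < γ x)
    (a b σ : ℝ) (ha : 0 < a) (hb : 0 < b) (hσ0 : 0 ≤ σ) (hσ1 : σ ≤ 1)
    (hid : ∀ x ∈ Ω, a * ‖gradient γ x‖ ^ 2 + b * γ x * lap γ x = γ x ^ σ)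
    (x₀ : E3) (hx₀ : x₀ ∈ Ω)
    (hmax : IsLocalMaxOn (fun x => ‖gradient γ x‖ ^ 2) Ω x₀) :
    a * ‖gradient γ x₀‖ ^ 2 ≤ γ x₀ ^ σ :=
  interior_max_gradient_bound_general Ω hΩ γ hγ hpos a b σ hb hσ0 hid x₀ hx₀ hmax
end
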